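/- arXiv:1011.0804 — 6 statements merged into one kernel-verified Lean document; each statement's English description precedes it below -/
import Mathlib

section
/- If I is a monomial ideal of k[S] generated by monomials x^g for g in a set Γ ⊆ S, then Newt(I) = Conv(Γ) + σ, where Conv(Γ) is the convex hull of Γ and the sum is the Minkowski sum with the cone σ. -/
open Pointwise

/-- The embedding `M = ℤ^d → ℝ^d`. -/
def latticeEmbed {d : ℕ} (v : Fin d → ℤ) : Fin d → ℝ := fun i => (v i : ℝ)

/-- `σ` is a rational convex polyhedral cone in `ℝ^d`. -/
def IsRatPolyCone {d : ℕ} (σ : Set (Fin d → ℝ)) : Prop :=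
  ∃ G : Finset (Fin d → ℤ), σ =
    {x | ∃ c : (Fin d → ℤ) → ℝ, (∀ g, 0 ≤ c g) ∧ x = ∑ g ∈ G, c g • latticeEmbed g}

/-- The Newton polytope of an ideal `I` of `k[S]`. -/
noncomputable def Newt {d : ℕ} (k : Type*) [Field k] (S : AddSubmonoid (Fin d → ℤ))
    (I : Ideal (AddMonoidAlgebra k S)) : Set (Fin d → ℝ) :=
  convexHull ℝ {x | ∃ v : S, AddMonoidAlgebra.single v (1 : k) ∈ I ∧ x = latticeEmbed ↑v}

/-!
The monomials of `I` are exactly the `x^(γ + s)` with `γ ∈ Γ` and `s ∈ S`, so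
`Newt(I) = Conv(Γ + S) = Conv(Γ) + Conv(S)`, and it remains to see `Conv(S) = σ`. Since `S`
is closed under addition, so is `Conv(S)`. A point `∑ c_g g` of `σ` (with `c_g ≥ 0` and lattice
generators `g`, which lie in `S`) is then in `Conv(S)`, because each `c_g g` lies on the segment
from `0` to `n g ∈ S` for an integer `n ≥ c_g`.
-/

namespace AddSubmonoid

variable {E : Type*} [AddCommGroup E] [Module ℝ E] (A : AddSubmonoid E)

lemma add_mem_convexHull {x y : E} (hx : x ∈ convexHull ℝ (A : Set E))
    (hy : y ∈ convexHull ℝ (A : Set E)) : x + y ∈ convexHull ℝ (A : Set E) := by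
  have hxy : x + y ∈ convexHull ℝ ((A : Set E) + (A : Set E)) :=
    (convexHull_add (R := ℝ) (A : Set E) (A : Set E)).symm ▸ Set.add_mem_add hx hy
  exact convexHull_mono (add_subset le_rfl le_rfl) hxy

lemma smul_mem_convexHull {a : E} (ha : a ∈ A) {t : ℝ} (ht : 0 ≤ t) :
    t • a ∈ convexHull ℝ (A : Set E) := by
  obtain ⟨n, hn⟩ := exists_nat_gt t
  have hn0 : (0 : ℝ) < n := ht.trans_lt hn
  have hseg : t • a ∈ segment ℝ 0 ((n : ℝ) • a) := by
    refine ⟨1 - t / n, t / n, by linarith [(div_lt_one hn0).2 hn], div_nonneg ht hn0.le,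
      by ring, ?_⟩
    rw [smul_zero, zero_add, smul_smul, div_mul_cancel₀ t hn0.ne']
  refine (convex_convexHull ℝ _).segment_subset (subset_convexHull ℝ _ A.zero_mem)
    (subset_convexHull ℝ _ ?_) hseg
  rw [Nat.cast_smul_eq_nsmul]
  exact A.nsmul_mem ha n

lemma sum_smul_mem_convexHull {ι : Type*} (s : Finset ι) {c : ι → ℝ} (hc : ∀ i ∈ s, 0 ≤ c i)
    {f : ι → E} (hf : ∀ i ∈ s, f i ∈ A) : ∑ i ∈ s, c i • f i ∈ convexHull ℝ (A : Set E) :=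
  Finset.sum_induction _ (· ∈ convexHull ℝ (A : Set E)) (fun _ _ => A.add_mem_convexHull)
    (subset_convexHull ℝ _ A.zero_mem) fun i hi => A.smul_mem_convexHull (hf i hi) (hc i hi)

end AddSubmonoid

def latticeEmbedHom (d : ℕ) : (Fin d → ℤ) →+ (Fin d → ℝ) :=
  (Int.castAddHom ℝ).compLeft (Fin d)

lemma coe_latticeEmbedHom (d : ℕ) : ⇑(latticeEmbedHom d) = latticeEmbed := rfl

namespace IsRatPolyCone

variable {d : ℕ} {σ : Set (Fin d → ℝ)}

lemma convex (hσ : IsRatPolyCone σ) : Convex ℝ σ := by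
  obtain ⟨G, rfl⟩ := hσ
  rintro _ ⟨c, hc, rfl⟩ _ ⟨c', hc', rfl⟩ a b ha hb -
  refine ⟨fun g => a * c g + b * c' g,
    fun g => add_nonneg (mul_nonneg ha (hc g)) (mul_nonneg hb (hc' g)), ?_⟩
  simp only [add_smul, mul_smul, Finset.sum_add_distrib, Finset.smul_sum]

lemma eq_convexHull (hσ : IsRatPolyCone σ) {S : AddSubmonoid (Fin d → ℤ)}
    (hS : ∀ v, v ∈ S ↔ latticeEmbed v ∈ σ) :
    σ = convexHull ℝ (latticeEmbed '' S) := by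
  refine (convexHull_min (Set.image_subset_iff.2 fun v hv => (hS v).1 hv) hσ.convex).antisymm' ?_
  obtain ⟨G, rfl⟩ := hσ
  have hGS : ∀ g ∈ G, g ∈ S := fun g hg =>
    (hS g).2 ⟨Pi.single g 1, fun h => by rw [Pi.single_apply]; split_ifs <;> norm_num,
      by simp [Pi.single_apply, ite_smul, hg]⟩
  rintro _ ⟨c, hc, rfl⟩
  rw [← coe_latticeEmbedHom, ← AddSubmonoid.coe_map]
  exact (S.map _).sum_smul_mem_convexHull G (fun g _ => hc g)
    fun g hg => AddSubmonoid.mem_map_of_mem _ (hGS g hg)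

end IsRatPolyCone

lemma AddMonoidAlgebra.single_one_mem_ideal_span_iff {k A : Type*} [Semiring k] [Nontrivial k]
    [AddMonoid A] {s : Set A} {v : A} :
    single v (1 : k) ∈ Ideal.span (of' k A '' s) ↔ ∃ m ∈ s, ∃ d, v = d + m := by
  rw [mem_ideal_span_of'_image]
  simp

lemma newt_span_of'_image {d : ℕ} (k : Type*) [Field k] (S : AddSubmonoid (Fin d → ℤ))
    (Γ : Set S) :
    Newt k S (Ideal.span (AddMonoidAlgebra.of' k S '' Γ)) =
      convexHull ℝ (latticeEmbed '' ((↑) '' Γ : Set (Fin d → ℤ)) +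
        latticeEmbed '' (S : Set (Fin d → ℤ))) := by
  refine congr_arg (convexHull ℝ) (Set.ext fun x => ?_)
  simp only [Set.mem_ofPred_eq, AddMonoidAlgebra.single_one_mem_ideal_span_iff, Set.mem_add,
    Set.mem_image]
  constructor
  · rintro ⟨v, ⟨γ, hγ, s, rfl⟩, rfl⟩
    exact ⟨_, ⟨γ, ⟨γ, hγ, rfl⟩, rfl⟩, _, ⟨s, s.2, rfl⟩,
      by simp [← coe_latticeEmbedHom, add_comm]⟩
  · rintro ⟨_, ⟨_, ⟨γ, hγ, rfl⟩, rfl⟩, _, ⟨s, hs, rfl⟩, rfl⟩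
    exact ⟨⟨s, hs⟩ + γ, ⟨γ, hγ, ⟨s, hs⟩, rfl⟩, by simp [← coe_latticeEmbedHom, add_comm]⟩

/-- If `I` is the monomial ideal of `k[S]` generated by the monomials
`x^g`, `g ∈ Γ ⊆ S`, then `Newt(I) = Conv(Γ) + σ` (Minkowski sum with the cone `σ`). -/
theorem stmt_1 {d : ℕ} (k : Type*) [Field k] (S : AddSubmonoid (Fin d → ℤ))
    (σ : Set (Fin d → ℝ)) (hσ : IsRatPolyCone σ)
    (hS : ∀ v : Fin d → ℤ, v ∈ S ↔ latticeEmbed v ∈ σ)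
    (Γ : Set S) (I : Ideal (AddMonoidAlgebra k S))
    (hI : I = Ideal.span ((fun v : S => AddMonoidAlgebra.single v (1 : k)) '' Γ)) :
    Newt k S I = convexHull ℝ (latticeEmbed '' ((↑) '' Γ)) + σ := by
  rw [hI, hσ.eq_convexHull hS, ← convexHull_add]
  exact newt_span_of'_image k S Γ
end

section
/- Let R be a ring of characteristic p > 0 and φ : R → R a surjective p^{−e}-linear map. Then every ideal I with φ(I) = I is a radical ideal. -/
theorem Ideal.isRadical_of_mapsTo_of_map_pow_mul {R : Type*} [CommSemiring R] {k : ℕ}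
    (hk : 1 < k) {φ : R → R} (hlin : ∀ r x, φ (r ^ k * x) = r * φ x) (hone : 1 ∈ Set.range φ)
    {I : Ideal R} (hI : Set.MapsTo φ I I) : I.IsRadical := by
  rw [Ideal.isRadical_iff_pow_one_lt k hk]
  intro r hr
  obtain ⟨y, hy⟩ := hone
  simpa only [hlin, hy, mul_one, SetLike.mem_coe] using hI (I.mul_mem_right y hr)

theorem stmt_6_general {R : Type*} [CommRing R] (p : ℕ) (hp : p.Prime)
    (e : ℕ) (he : 0 < e) (φ : R → R)
    (hlin : ∀ r x, φ (r ^ p ^ e * x) = r * φ x)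
    (hsurj : Function.Surjective φ)
    (I : Ideal R) (hI : φ '' (I : Set R) = (I : Set R)) :
    I.IsRadical :=
  Ideal.isRadical_of_mapsTo_of_map_pow_mul (Nat.one_lt_pow he.ne' hp.one_lt) hlin (hsurj 1)
    (Set.mapsTo_iff_image_subset.2 hI.subset)

/-- Let `R` be a ring of characteristic `p > 0` and `φ : R → R` a
surjective `p^{−e}`-linear map (additive, with `φ(r^{p^e}·x) = r·φ(x)`).  Then every
ideal `I` with `φ(I) = I` (image of `I` under `φ` equals `I`) is a radical ideal. -/
theorem stmt_6 {R : Type*} [CommRing R] (p : ℕ) (hp : p.Prime) [CharP R p]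
    (e : ℕ) (he : 0 < e) (φ : R → R)
    (hadd : ∀ x y, φ (x + y) = φ x + φ y)
    (hlin : ∀ r x, φ (r ^ p ^ e * x) = r * φ x)
    (hsurj : Function.Surjective φ)
    (I : Ideal R) (hI : φ '' (I : Set R) = (I : Set R)) :
    I.IsRadical :=
  stmt_6_general p hp e he φ hlin hsurj I hI
end

section
/- Let R be a ring of characteristic p > 0 and φ : R → R a surjective p^{−e}-linear map. If I and J are ideals with φ(I) ⊆ I and φ(J) ⊆ J, then φ(I ∩ J) ⊆ I ∩ J; moreover, for surjective φ, any ideal K with φ(K) ⊆ K automatically satisfies φ(K) = K. -/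
theorem Ideal.subset_image_of_map_pow_mul {R : Type*} [CommSemiring R] {φ : R → R} {q : ℕ}
    (hq : q ≠ 0) (hφ : ∀ r x, φ (r ^ q * x) = r * φ x) (h1 : 1 ∈ Set.range φ)
    (K : Ideal R) : (K : Set R) ⊆ φ '' K := by
  obtain ⟨u, hu⟩ := h1
  intro k hk
  exact ⟨k ^ q * u, K.mul_mem_right u (K.pow_mem_of_mem hk q (Nat.pos_of_ne_zero hq)),
    by rw [hφ, hu, mul_one]⟩

theorem stmt_7_general {R : Type*} [CommRing R] (p : ℕ) (hp : p.Prime)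
    (e : ℕ) (φ : R → R)
    (hlin : ∀ r x, φ (r ^ p ^ e * x) = r * φ x)
    (hsurj : Function.Surjective φ) :
    (∀ I J : Ideal R, φ '' (I : Set R) ⊆ (I : Set R) → φ '' (J : Set R) ⊆ (J : Set R) →
        φ '' ((I ⊓ J : Ideal R) : Set R) ⊆ ((I ⊓ J : Ideal R) : Set R)) ∧
    (∀ K : Ideal R, φ '' (K : Set R) ⊆ (K : Set R) → φ '' (K : Set R) = (K : Set R)) := by
  refine ⟨fun I J hI hJ => ?_, fun K hK => ?_⟩
  · exact (Set.image_inter_subset φ I J).trans (Set.inter_subset_inter hI hJ)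
  · exact hK.antisymm
      (K.subset_image_of_map_pow_mul (pow_ne_zero e hp.ne_zero) hlin (hsurj 1))

/-- Let `R` have characteristic `p > 0` and `φ : R → R` be a surjective
`p^{−e}`-linear map.  If `I`, `J` are ideals with `φ(I) ⊆ I` and `φ(J) ⊆ J`, then
`φ(I ∩ J) ⊆ I ∩ J`; moreover any ideal `K` with `φ(K) ⊆ K` satisfies `φ(K) = K`. -/
theorem stmt_7 {R : Type*} [CommRing R] (p : ℕ) (hp : p.Prime) [CharP R p]
    (e : ℕ) (he : 0 < e) (φ : R → R)
    (hadd : ∀ x y, φ (x + y) = φ x + φ y)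
    (hlin : ∀ r x, φ (r ^ p ^ e * x) = r * φ x)
    (hsurj : Function.Surjective φ) :
    (∀ I J : Ideal R, φ '' (I : Set R) ⊆ (I : Set R) → φ '' (J : Set R) ⊆ (J : Set R) →
        φ '' ((I ⊓ J : Ideal R) : Set R) ⊆ ((I ⊓ J : Ideal R) : Set R)) ∧
    (∀ K : Ideal R, φ '' (K : Set R) ⊆ (K : Set R) → φ '' (K : Set R) = (K : Set R)) :=
  stmt_7_general p hp e φ hlin hsurj
end

section
/- In the polynomial ring R = k[x] over a perfect field k of characteristic p > 0, with canonical splitting φ_c : R → R sending x^i to x^{i/p} if p divides i and to 0 otherwise (extended p^{−1}-linearly), the fractional R-submodule of k(x) generated by 1/(x+1) is φ_c-fixed: applying the natural extension of φ_c to fraction field elements maps this fractional ideal onto itself. -/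
/-!
Write `u = x + c` with `c ≠ 0`. Since `f / u = u⁻ᵖ · f u^{p-1}`, the `p⁻¹`-linearity of `φ` gives
`φ (f / u) = φ (f u^{p-1}) / u`, and `φ` maps polynomials to polynomials; so `φ` maps the
fractional ideal `R · u⁻¹` into itself. For surjectivity it suffices that `φ (1 / u)` is a nonzero
constant multiple of `1 / u`, i.e. that `φ (u^{p-1})` is a nonzero constant: `u^{p-1}` has degree
`< p`, so only its constant term `c^{p-1}` survives `φ`.
-/

open Polynomial

theorem mul_inv_eq_inv_pow_mul {K : Type*} [Field K] {u : K} (hu : u ≠ 0) (w : K) {p : ℕ}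
    (hp : 0 < p) : w * u⁻¹ = u⁻¹ ^ p * (w * u ^ (p - 1)) := by
  obtain ⟨n, rfl⟩ : ∃ n, p = n + 1 := ⟨p - 1, by omega⟩
  rw [Nat.add_sub_cancel, pow_succ, inv_pow]
  field_simp

section

variable {k : Type*} [Field k]

structure IsCanonicalSplitting (p : ℕ) (φ : RatFunc k →+ RatFunc k) : Prop where
  map_pow_mul (f g : RatFunc k) : φ (f ^ p * g) = f * φ g
  map_X_pow (i : ℕ) : φ (algebraMap k[X] (RatFunc k) (X ^ i)) =
    if p ∣ i then algebraMap k[X] (RatFunc k) (X ^ (i / p)) else 0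

namespace IsCanonicalSplitting

variable {p : ℕ} [ExpChar k p] {φ : RatFunc k →+ RatFunc k}

theorem map_mul_inv (hφ : IsCanonicalSplitting p φ) {u : k[X]} (hu : u ≠ 0) (r : k[X]) :
    φ (algebraMap k[X] (RatFunc k) r * (algebraMap k[X] (RatFunc k) u)⁻¹) =
      φ (algebraMap k[X] (RatFunc k) (r * u ^ (p - 1))) * (algebraMap k[X] (RatFunc k) u)⁻¹ := by
  rw [mul_inv_eq_inv_pow_mul (RatFunc.algebraMap_ne_zero hu) _ (expChar_pos k p),
    hφ.map_pow_mul, mul_comm, ← map_pow, ← map_mul]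

variable [PerfectRing k p]

theorem map_algebraMap_monomial (hφ : IsCanonicalSplitting p φ) (n : ℕ) (a : k) :
    φ (algebraMap k[X] (RatFunc k) (monomial n a)) =
      if p ∣ n then algebraMap k[X] (RatFunc k) (monomial (n / p) ((frobeniusEquiv k p).symm a))
      else 0 := by
  have hmon : monomial n a = C ((frobeniusEquiv k p).symm a) ^ p * X ^ n := by
    rw [← C_pow, frobeniusEquiv_symm_pow_p, C_mul_X_pow_eq_monomial]
  rw [hmon, map_mul, map_pow, hφ.map_pow_mul, hφ.map_X_pow]
  split_ifs
  · rw [← map_mul, C_mul_X_pow_eq_monomial]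
  · rw [mul_zero]

theorem exists_map_algebraMap_eq (hφ : IsCanonicalSplitting p φ) (q : k[X]) :
    ∃ s : k[X], φ (algebraMap k[X] (RatFunc k) q) = algebraMap k[X] (RatFunc k) s := by
  induction q using Polynomial.induction_on' with
  | add f g hf hg =>
    obtain ⟨s, hs⟩ := hf
    obtain ⟨t, ht⟩ := hg
    exact ⟨s + t, by rw [map_add, map_add, hs, ht, map_add]⟩
  | monomial n a =>
    rw [hφ.map_algebraMap_monomial]
    split_ifs
    · exact ⟨_, rfl⟩
    · exact ⟨0, (map_zero _).symm⟩

theorem map_algebraMap_of_natDegree_lt (hφ : IsCanonicalSplitting p φ) {q : k[X]}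
    (hq : q.natDegree < p) :
    φ (algebraMap k[X] (RatFunc k) q) =
      algebraMap k[X] (RatFunc k) (C ((frobeniusEquiv k p).symm (q.coeff 0))) := by
  conv_lhs => rw [as_sum_range' q p hq, map_sum, map_sum]
  rw [Finset.sum_eq_single 0]
  · rw [hφ.map_algebraMap_monomial, if_pos (dvd_zero p), Nat.zero_div, monomial_zero_left]
  · intro i hi hi0
    have : ¬ p ∣ i := fun hdvd => hi0 (Nat.eq_zero_of_dvd_of_lt hdvd (Finset.mem_range.mp hi))
    rw [hφ.map_algebraMap_monomial, if_neg this]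
  · exact fun h => absurd (Finset.mem_range.mpr (expChar_pos k p)) h

theorem map_inv_X_add_C (hφ : IsCanonicalSplitting p φ) (c : k) :
    φ (algebraMap k[X] (RatFunc k) (X + C c))⁻¹ =
      algebraMap k[X] (RatFunc k) (C ((frobeniusEquiv k p).symm (c ^ (p - 1)))) *
        (algebraMap k[X] (RatFunc k) (X + C c))⁻¹ := by
  have hdeg : ((X + C c) ^ (p - 1)).natDegree < p := by
    rw [(monic_X_add_C c).natDegree_pow, natDegree_X_add_C, mul_one]
    exact Nat.sub_lt (expChar_pos k p) one_pos
  have hcoeff : ((X + C c) ^ (p - 1)).coeff 0 = c ^ (p - 1) := by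
    simp [coeff_zero_eq_eval_zero]
  have h := hφ.map_mul_inv (X_add_C_ne_zero c) 1
  rwa [map_one, one_mul, one_mul, hφ.map_algebraMap_of_natDegree_lt hdeg, hcoeff] at h

theorem image_span_inv_X_add_C (hφ : IsCanonicalSplitting p φ) {c : k} (hc : c ≠ 0) :
    φ '' (Submodule.span k[X] {(algebraMap k[X] (RatFunc k) (X + C c))⁻¹} : Set (RatFunc k)) =
      Submodule.span k[X] {(algebraMap k[X] (RatFunc k) (X + C c))⁻¹} := by
  ext x
  simp only [Set.mem_image, SetLike.mem_coe, Submodule.mem_span_singleton, Algebra.smul_def]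
  constructor
  · rintro ⟨_, ⟨r, rfl⟩, rfl⟩
    obtain ⟨s, hs⟩ := hφ.exists_map_algebraMap_eq (r * (X + C c) ^ (p - 1))
    exact ⟨s, by rw [hφ.map_mul_inv (X_add_C_ne_zero c), hs]⟩
  · rintro ⟨r, rfl⟩
    set d := (frobeniusEquiv k p).symm (c ^ (p - 1))
    have hd : d ≠ 0 := by simpa [d] using pow_ne_zero (p - 1) hc
    refine ⟨_, ⟨(C d⁻¹ * r) ^ p, rfl⟩, ?_⟩
    rw [map_pow, hφ.map_pow_mul, hφ.map_inv_X_add_C, ← mul_assoc, ← map_mul, mul_right_comm,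
      ← C_mul, inv_mul_cancel₀ hd, C_1, one_mul]

end IsCanonicalSplitting

end

/-- Let `R = k[x]`, `k` a perfect field of characteristic `p`, and let
`φ_c` be (the natural extension to `k(x)` of) the canonical splitting, the
`p^{−1}`-linear map with `φ_c(x^i) = x^{i/p}` if `p ∣ i` and `0` otherwise.  Then the
fractional `R`-submodule of `k(x)` generated by `1/(x+1)` is `φ_c`-fixed: `φ_c` maps
it onto itself. -/
theorem stmt_9 {k : Type*} [Field k] (p : ℕ) [Fact p.Prime] [CharP k p]
    [PerfectRing k p]
    (φ : RatFunc k → RatFunc k)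
    (hadd : ∀ x y, φ (x + y) = φ x + φ y)
    (hlin : ∀ f g : RatFunc k, φ (f ^ p * g) = f * φ g)
    (hmono : ∀ i : ℕ,
      φ (algebraMap (Polynomial k) (RatFunc k) (Polynomial.X ^ i)) =
        if p ∣ i then algebraMap (Polynomial k) (RatFunc k) (Polynomial.X ^ (i / p))
        else 0) :
    φ '' ((Submodule.span (Polynomial k)
        {(algebraMap (Polynomial k) (RatFunc k) (Polynomial.X + 1))⁻¹} :
        Submodule (Polynomial k) (RatFunc k)) : Set (RatFunc k))
      = ((Submodule.span (Polynomial k)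
        {(algebraMap (Polynomial k) (RatFunc k) (Polynomial.X + 1))⁻¹} :
        Submodule (Polynomial k) (RatFunc k)) : Set (RatFunc k)) := by
  have hφ : IsCanonicalSplitting p (AddMonoidHom.mk' φ hadd) := ⟨hlin, hmono⟩
  simpa using hφ.image_span_inv_X_add_C one_ne_zero
end

section
/- With the toric setup (R = k[S], φ the toric p^{−e}-linear map with parameter w, 𝔞 a monomial ideal, t ≥ 0 rational with denominator prime to p): if I is C^{φ,𝔞^t}-fixed and F is a face of t·Newt(𝔞) such that some exponent v₀ with x^{v₀} ∈ I lies in w/(1−p^e) + F, then for every lattice point v in relint(w/(1−p^e) + F) ∩ S, the monomial x^v belongs to I. -/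
/-!
The exponent map `u ↦ (u - w) / p^e` behind `φ` contracts towards `c = w / (1 - p^e)`, so
`φⁿ(x^u) = x^v` for `u = c + p^{ne} (v - c)`. Write `v = c + a` and `v₀ = c + b` with
`a ∈ relint F` and `b ∈ F`. Then `u - v₀ = p^{ne} a - b`, which is `p^{ne} - 1` times
`a + (a - b) / (p^{ne} - 1)`, a point that stays in `F` once `p^{ne}` is large because `a` is
relatively interior. Since `p ∤ den t` there are arbitrarily large `n` with
`N = t (p^{ne} - 1) ∈ ℕ`; then `u - v₀ ∈ N · Newt(𝔞)`, so `x^{u - v₀}` is integral over `𝔞^N`,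
and `x^v = φⁿ(x^{u - v₀} · x^{v₀})` is one of the generators of `C^{φ,𝔞^t} I = I`.
-/

open Pointwise

/-- `I` is a monomial ideal. -/
def IsMonomialIdeal {d : ℕ} (k : Type*) [Field k] (S : AddSubmonoid (Fin d → ℤ))
    (I : Ideal (AddMonoidAlgebra k S)) : Prop :=
  ∃ E : Set S, I = Ideal.span ((fun v : S => AddMonoidAlgebra.single v (1 : k)) '' E)

/-- The set of elements integral over the ideal `J` (the integral closure of `J`). -/
def intClSet {R : Type*} [CommRing R] (J : Ideal R) : Set R :=
  {x | ∃ m : ℕ, 0 < m ∧ ∃ c : ℕ → R, (∀ i < m, c i ∈ J ^ (m - i)) ∧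
    x ^ m + ∑ i ∈ Finset.range m, c i * x ^ i = 0}

/-- `I` is `C^{φ,𝔞^t}`-fixed: `∑_{n>0} φⁿ(\overline{𝔞^{t(p^{ne}−1)}}·I) = I`, the sum
running over `n > 0` with `t(p^{ne}−1) ∈ ℤ`. -/
def IsCartierFixed {R : Type*} [CommRing R] (p e : ℕ) (t : ℚ) (φ : R → R)
    (𝔞 I : Ideal R) : Prop :=
  Ideal.span {y : R | ∃ n N : ℕ, 0 < n ∧ (N : ℚ) = t * ((p : ℚ) ^ (n * e) - 1) ∧
    ∃ z ∈ Ideal.span (intClSet (𝔞 ^ N)) * I, y = φ^[n] z} = I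

/-- `F` is a face of the convex set `C` (with `C` a face of itself). -/
def IsFaceOf {d : ℕ} (F C : Set (Fin d → ℝ)) : Prop :=
  F ⊆ C ∧ Convex ℝ F ∧ ∀ x ∈ C, ∀ y ∈ C, ∀ δ : ℝ, 0 < δ → δ < 1 →
    δ • x + (1 - δ) • y ∈ F → x ∈ F ∧ y ∈ F

lemma IsRatPolyCone.convex_s11 {d : ℕ} {σ : Set (Fin d → ℝ)} (hσ : IsRatPolyCone σ) :
    Convex ℝ σ := by
  obtain ⟨G, rfl⟩ := hσ
  rintro _ ⟨c, hc, rfl⟩ _ ⟨c', hc', rfl⟩ a b ha hb -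
  refine ⟨fun g => a * c g + b * c' g, fun g =>
    add_nonneg (mul_nonneg ha (hc g)) (mul_nonneg hb (hc' g)), ?_⟩
  simp only [Finset.smul_sum, ← Finset.sum_add_distrib, add_smul, smul_smul]

lemma IsRatPolyCone.smul_mem {d : ℕ} {σ : Set (Fin d → ℝ)} (hσ : IsRatPolyCone σ) {r : ℝ}
    (hr : 0 ≤ r) {x : Fin d → ℝ} (hx : x ∈ σ) : r • x ∈ σ := by
  obtain ⟨G, rfl⟩ := hσ
  obtain ⟨c, hc, rfl⟩ := hx
  exact ⟨fun g => r * c g, fun g => mul_nonneg hr (hc g), by simp only [Finset.smul_sum, smul_smul]⟩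

lemma latticeEmbed_add {d : ℕ} (u v : Fin d → ℤ) :
    latticeEmbed (u + v) = latticeEmbed u + latticeEmbed v := by
  ext; simp [latticeEmbed]

lemma latticeEmbed_sub {d : ℕ} (u v : Fin d → ℤ) :
    latticeEmbed (u - v) = latticeEmbed u - latticeEmbed v := by
  ext; simp [latticeEmbed]

lemma latticeEmbed_zsmul {d : ℕ} (z : ℤ) (v : Fin d → ℤ) :
    latticeEmbed (z • v) = (z : ℝ) • latticeEmbed v := by
  ext; simp [latticeEmbed]

lemma intrinsicInterior_singleton_add {E : Type*} [AddCommGroup E] [Module ℝ E]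
    [TopologicalSpace E] [IsTopologicalAddGroup E] (c : E) (F : Set E) :
    intrinsicInterior ℝ ({c} + F) = {c} + intrinsicInterior ℝ F := by
  have hc : ⇑(ContinuousAffineEquiv.constVAdd ℝ E c) = (c + ·) := rfl
  simpa only [Set.singleton_add, hc] using
    (ContinuousAffineEquiv.constVAdd ℝ E c).intrinsicInterior_image F

lemma eventually_add_smul_sub_mem_of_mem_intrinsicInterior {E : Type*} [NormedAddCommGroup E]
    [NormedSpace ℝ E] {F : Set E} {a b : E} (ha : a ∈ intrinsicInterior ℝ F) (hb : b ∈ F) :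
    ∀ᶠ μ in nhds (0 : ℝ), a + μ • (a - b) ∈ F := by
  obtain ⟨a', ha', rfl⟩ := ha
  have hline (μ : ℝ) : (a' : E) + μ • ((a' : E) - b) ∈ affineSpan ℝ F := by
    have hdir := AffineSubspace.vsub_mem_direction a'.2 (subset_affineSpan ℝ F hb)
    simpa [vadd_eq_add, add_comm] using
      AffineSubspace.vadd_mem_of_mem_direction (Submodule.smul_mem _ μ hdir) a'.2
  let f : ℝ → affineSpan ℝ F := fun μ => ⟨_, hline μ⟩
  have hf : Continuous f := by fun_prop
  have hf0 : f 0 = a' := by ext; simp [f]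
  have := hf.continuousAt.preimage_mem_nhds (hf0 ▸ isOpen_interior.mem_nhds ha')
  filter_upwards [this] with μ hμ using interior_subset (s := ((↑) : affineSpan ℝ F → E) ⁻¹' F) hμ

lemma mem_span_rat_of_cast_mem_span_real {κ ι : Type*} [Fintype κ] (f : ι → κ → ℚ)
    {x : κ → ℚ} (hx : (fun k => (x k : ℝ)) ∈
      Submodule.span ℝ (Set.range fun j k => (f j k : ℝ))) :
    x ∈ Submodule.span ℚ (Set.range f) := by
  classical
  by_contra hnot
  obtain ⟨ψ, hψx, hψf⟩ := Submodule.exists_dual_map_eq_bot_of_notMem hnot inferInstance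
  -- `ψ` is a dot product with rational coefficients, which makes sense over `ℝ` as well.
  let a : κ → ℚ := fun k => ψ fun j => if k = j then 1 else 0
  let Ψ : (κ → ℝ) →ₗ[ℝ] ℝ := ∑ k, (a k : ℝ) • LinearMap.proj k
  have hΨ (y : κ → ℚ) : Ψ (fun k => (y k : ℝ)) = ψ y := by
    simp [Ψ, a, LinearMap.pi_apply_eq_sum_univ ψ y, mul_comm]
  have hspan : Submodule.span ℝ (Set.range fun j k => (f j k : ℝ)) ≤ LinearMap.ker Ψ := by
    refine Submodule.span_le.2 ?_
    rintro _ ⟨j, rfl⟩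
    have : ψ (f j) ∈ (⊥ : Submodule ℚ ℚ) :=
      hψf ▸ Submodule.mem_map_of_mem (Submodule.subset_span ⟨j, rfl⟩)
    rw [Submodule.mem_bot] at this
    simp [hΨ, this]
  exact hψx (by exact_mod_cast (hΨ x).symm.trans (hspan hx))

lemma mem_convexHull_rat_of_cast_mem_convexHull_real {κ : Type*} [Fintype κ]
    {A : Set (κ → ℝ)} (hA : ∀ y ∈ A, ∃ q : κ → ℚ, y = fun k => (q k : ℝ)) {z : κ → ℚ}
    (hz : (fun k => (z k : ℝ)) ∈ convexHull ℝ A) :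
    z ∈ convexHull ℚ ((fun q k => (q k : ℝ)) ⁻¹' A) := by
  obtain ⟨ι, _, pt, w, hptA, hind, hpos, hsum, hcomb⟩ := eq_pos_convex_span_of_mem_convexHull hz
  choose q hq using fun j => hA (pt j) (hptA ⟨j, rfl⟩)
  -- Homogenising with an extra coordinate `1` turns the affine condition into a linear one.
  let hom : (κ → ℚ) → Option κ → ℚ := fun y o => o.elim 1 y
  obtain ⟨μ, hμ⟩ : ∃ μ : ι → ℚ, ∑ j, μ j • hom (q j) = hom z := by
    refine (Submodule.mem_span_range_iff_exists_fun ℚ).1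
      (mem_span_rat_of_cast_mem_span_real (fun j => hom (q j)) ?_)
    refine (Submodule.mem_span_range_iff_exists_fun ℝ).2 ⟨w, funext fun o => ?_⟩
    cases o with
    | none => simpa [hom] using hsum
    | some k => simpa [hom, hq] using congrFun hcomb k
  have hμsum : ∑ j, μ j = 1 := by simpa [hom] using congrFun hμ none
  have hμcomb : ∑ j, μ j • q j = z := funext fun k => by simpa [hom] using congrFun hμ (some k)
  have hμw : ∀ j, (μ j : ℝ) = w j := fun j => hind.eq_of_sum_eq_sum (s := Finset.univ)
    (w₁ := fun j => (μ j : ℝ)) (w₂ := w)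
    (by rw [hsum]; exact_mod_cast hμsum)
    (by rw [hcomb, ← hμcomb]; ext k; simp [hq]) j (Finset.mem_univ j)
  refine mem_convexHull_of_exists_fintype μ q (fun j => ?_) hμsum (fun j => ?_) hμcomb
  · exact_mod_cast (hμw j).symm ▸ (hpos j).le
  · simpa [← hq j] using hptA ⟨j, rfl⟩

lemma exists_natCast_eq_mul_of_den_dvd {t : ℚ} (ht : 0 ≤ t) {M : ℕ} (h : t.den ∣ M) :
    ∃ N : ℕ, (N : ℚ) = t * M := by
  obtain ⟨c, rfl⟩ := h
  refine ⟨t.num.toNat * c, ?_⟩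
  have hnum : (t.num.toNat : ℚ) = t * t.den := by
    rw [Rat.mul_den_eq_num]
    exact_mod_cast Int.toNat_of_nonneg (Rat.num_nonneg.2 ht)
  push_cast
  rw [hnum, mul_assoc]

lemma exists_common_denominator {ι : Type*} [Fintype ι] {w : ι → ℚ} (hw : ∀ j, 0 ≤ w j) :
    ∃ m : ℕ, 0 < m ∧ ∃ c : ι → ℕ, ∀ j, (c j : ℚ) = w j * m := by
  choose c hc using fun j => exists_natCast_eq_mul_of_den_dvd (hw j)
    (Finset.dvd_prod_of_mem (fun j => (w j).den) (Finset.mem_univ j))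
  exact ⟨_, Finset.prod_pos fun j _ => (w j).pos, c, hc⟩

lemma exists_natCast_eq_mul_pow_sub_one {p e : ℕ} (hp : 1 < p) (he : 0 < e) {t : ℚ}
    (ht : 0 ≤ t) (hcop : p.Coprime t.den) (C : ℝ) :
    ∃ n N : ℕ, 0 < n ∧ (N : ℚ) = t * ((p : ℚ) ^ (n * e) - 1) ∧
      C < (p : ℝ) ^ (n * e) - 1 := by
  set k := ⌈C⌉₊ + 1
  set n := k * t.den.totient
  have hn : 0 < n := Nat.mul_pos (by omega) (Nat.totient_pos.2 t.pos)
  have hpow : 1 ≤ p ^ (n * e) := Nat.one_le_pow _ _ (by omega)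
  have hdvd : t.den ∣ p ^ (n * e) - 1 := by
    have h := (Nat.ModEq.pow_totient (hcop.pow_left e)).pow k
    rw [one_pow, ← pow_mul, ← pow_mul, show e * (t.den.totient * k) = n * e by ring] at h
    exact (Nat.modEq_iff_dvd' hpow).1 h.symm
  obtain ⟨N, hN⟩ := exists_natCast_eq_mul_of_den_dvd ht hdvd
  refine ⟨n, N, hn, by rw [hN, Nat.cast_sub hpow]; push_cast; rfl, ?_⟩
  have hk : k ≤ n * e := le_trans (Nat.le_mul_of_pos_right k (Nat.totient_pos.2 t.pos))
    (Nat.le_mul_of_pos_right n he)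
  have hlt : k + 1 ≤ p ^ (n * e) := by have := Nat.lt_pow_self (n := n * e) hp; omega
  have hkR : ((k + 1 : ℕ) : ℝ) ≤ (p : ℝ) ^ (n * e) := by exact_mod_cast hlt
  have hC : C < k := by simp only [k]; push_cast; linarith [Nat.le_ceil C]
  push_cast at hkR
  linarith

lemma mem_intClSet_of_pow_mem_pow {R : Type*} [CommRing R] {J : Ideal R} {x : R} {m : ℕ}
    (hm : 0 < m) (hx : x ^ m ∈ J ^ m) : x ∈ intClSet J := by
  refine ⟨m, hm, fun i => if i = 0 then -x ^ m else 0, fun i _ => ?_, ?_⟩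
  · dsimp only
    split_ifs with h
    · simpa [h] using neg_mem hx
    · exact zero_mem _
  · rw [Finset.sum_eq_single_of_mem 0 (Finset.mem_range.2 hm) fun i _ hi => by simp [hi]]
    simp

lemma single_sum_nsmul_mem_pow {k G : Type*} [CommSemiring k] [AddCommMonoid G]
    {𝔞 : Ideal (AddMonoidAlgebra k G)} {ι : Type*} (s : Finset ι) (f : ι → G) (n : ι → ℕ)
    (hf : ∀ i ∈ s, AddMonoidAlgebra.single (f i) (1 : k) ∈ 𝔞) :
    AddMonoidAlgebra.single (∑ i ∈ s, n i • f i) (1 : k) ∈ 𝔞 ^ ∑ i ∈ s, n i := by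
  have h : AddMonoidAlgebra.single (∑ i ∈ s, n i • f i) (1 : k) =
      ∏ i ∈ s, AddMonoidAlgebra.single (f i) (1 : k) ^ n i := by
    simp [AddMonoidAlgebra.single_pow]
  rw [h, ← Finset.prod_pow_eq_pow_sum]
  exact Ideal.prod_mem_prod fun i hi => Ideal.pow_mem_pow (hf i hi) _

section Newton

variable {d : ℕ} {k : Type*} [Field k] {S : AddSubmonoid (Fin d → ℤ)}
  {𝔞 : Ideal (AddMonoidAlgebra k S)}

lemma mem_of_latticeEmbed_mem_smul_Newt {σ : Set (Fin d → ℝ)} (hσ : IsRatPolyCone σ)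
    (hS : ∀ v : Fin d → ℤ, v ∈ S ↔ latticeEmbed v ∈ σ) {N : ℕ} {g : Fin d → ℤ}
    (hg : latticeEmbed g ∈ (N : ℝ) • Newt k S 𝔞) : g ∈ S := by
  have hNewt : Newt k S 𝔞 ⊆ σ := convexHull_min (by rintro _ ⟨v, -, rfl⟩; exact (hS v).1 v.2)
    hσ.convex_s11
  obtain ⟨z, hz, hgz⟩ := hg
  exact (hS g).2 (hgz ▸ hσ.smul_mem N.cast_nonneg (hNewt hz))

lemma exists_nsmul_eq_sum_nsmul_of_mem_smul_Newt {N : ℕ} (hN : 0 < N) {g : S}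
    (hg : latticeEmbed ↑g ∈ (N : ℝ) • Newt k S 𝔞) :
    ∃ (ι : Type) (_ : Fintype ι) (s : ι → S) (c : ι → ℕ) (m : ℕ), 0 < m ∧
      (∀ j, AddMonoidAlgebra.single (s j) (1 : k) ∈ 𝔞) ∧ ∑ j, c j = m * N ∧
      m • g = ∑ j, c j • s j := by
  obtain ⟨z, hz, hgz⟩ := hg
  let zq : Fin d → ℚ := fun i => ((g : Fin d → ℤ) i : ℚ) / N
  have hzq : (fun i => (zq i : ℝ)) = z := funext fun i => by
    have := congrFun hgz i
    simp only [latticeEmbed, Pi.smul_apply, smul_eq_mul] at this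
    simp [zq, ← this, hN.ne']
  have hA : ∀ y ∈ {x | ∃ v : S, AddMonoidAlgebra.single v (1 : k) ∈ 𝔞 ∧ x = latticeEmbed ↑v},
      ∃ q : Fin d → ℚ, y = fun i => (q i : ℝ) := by
    rintro _ ⟨v, -, rfl⟩
    exact ⟨fun i => ((v : Fin d → ℤ) i : ℚ), by ext; simp [latticeEmbed]⟩
  obtain ⟨ι, _, w, q, hw0, hw1, hqA, hwq⟩ := mem_convexHull_iff_exists_fintype.1
    (mem_convexHull_rat_of_cast_mem_convexHull_real hA (hzq ▸ hz))
  choose s hs𝔞 hsq using hqA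
  obtain ⟨m, hm, c, hc⟩ := exists_common_denominator hw0
  have hcsum : ∑ j, c j = m := by
    have : ((∑ j, c j : ℕ) : ℚ) = m := by simp [hc, ← Finset.sum_mul, hw1]
    exact_mod_cast this
  refine ⟨ι, inferInstance, s, fun j => c j * N, m, hm, hs𝔞, by rw [← Finset.sum_mul, hcsum], ?_⟩
  apply Subtype.ext
  funext i
  have hqi (j : ι) : q j i = ((s j : Fin d → ℤ) i : ℚ) := by
    have := congrFun (hsq j) i
    simp only [latticeEmbed] at this
    exact_mod_cast this
  have hzi : ∑ j, w j * q j i = zq i := by simpa using congrFun hwq i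
  have hcoord : (m : ℚ) * (g : Fin d → ℤ) i = ∑ j, (c j * N : ℚ) * (s j : Fin d → ℤ) i := by
    simp only [hc, ← hqi]
    rw [show (m : ℚ) * (g : Fin d → ℤ) i = m * N * zq i by simp [zq]; field_simp, ← hzi,
      Finset.mul_sum]
    exact Finset.sum_congr rfl fun j _ => by ring
  simp only [AddSubmonoidClass.coe_nsmul, AddSubmonoid.coe_finsetSum, Pi.smul_apply,
    Finset.sum_apply]
  exact_mod_cast hcoord

lemma single_mem_intClSet_of_mem_smul_Newt {N : ℕ} {g : S}
    (hg : latticeEmbed ↑g ∈ (N : ℝ) • Newt k S 𝔞) :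
    AddMonoidAlgebra.single g (1 : k) ∈ intClSet (𝔞 ^ N) := by
  rcases N.eq_zero_or_pos with rfl | hN
  · exact mem_intClSet_of_pow_mem_pow one_pos (by simp)
  obtain ⟨ι, _, s, c, m, hm, hs, hc, hmg⟩ := exists_nsmul_eq_sum_nsmul_of_mem_smul_Newt hN hg
  refine mem_intClSet_of_pow_mem_pow hm ?_
  rw [AddMonoidAlgebra.single_pow, one_pow, hmg, ← pow_mul, mul_comm, ← hc]
  exact single_sum_nsmul_mem_pow _ s c fun j _ => hs j

end Newton

lemma iterate_single_geom_sum {d : ℕ} {k : Type*} [Semiring k] {S : AddSubmonoid (Fin d → ℤ)}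
    {q : ℤ} {w : Fin d → ℤ} {φ : AddMonoidAlgebra k S → AddMonoidAlgebra k S}
    (hφ : ∀ (v : S) (u : Fin d → ℤ), q • u = ↑v - w →
      ∃ hu : u ∈ S, φ (AddMonoidAlgebra.single v (1 : k)) =
        AddMonoidAlgebra.single (⟨u, hu⟩ : S) (1 : k))
    (v : S) (n : ℕ) (hn : q ^ n • (v : Fin d → ℤ) + (∑ i ∈ Finset.range n, q ^ i) • w ∈ S) :
    φ^[n] (AddMonoidAlgebra.single ⟨_, hn⟩ (1 : k)) = AddMonoidAlgebra.single v 1 := by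
  induction n with
  | zero => simp
  | succ n ih =>
    obtain ⟨hu, hφu⟩ := hφ ⟨_, hn⟩ (q ^ n • (v : Fin d → ℤ) + (∑ i ∈ Finset.range n, q ^ i) • w)
      (by
        change _ = q ^ (n + 1) • (v : Fin d → ℤ) + (∑ i ∈ Finset.range (n + 1), q ^ i) • w - w
        rw [geom_sum_succ, pow_succ']
        module)
    rw [Function.iterate_succ_apply, hφu, ih hu]

lemma pow_smul_add_geom_sum_smul_sub {E : Type*} [AddCommGroup E] [Module ℝ E] {q : ℝ}
    (hq : q ≠ 1) (n : ℕ) (w a b : E) :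
    q ^ n • ((1 / (1 - q)) • w + a) + (∑ i ∈ Finset.range n, q ^ i) • w -
      ((1 / (1 - q)) • w + b) = q ^ n • a - b := by
  have h : ∑ i ∈ Finset.range n, q ^ i = (1 - q ^ n) * (1 / (1 - q)) := by
    rw [geom_sum_eq hq]
    field_simp [sub_ne_zero.2 hq, sub_ne_zero.2 hq.symm]
    ring
  rw [h]
  module

lemma latticeEmbed_orbit_sub_mem_smul {d p e n N : ℕ} (hp : 1 < p) (he : 0 < e) (hn : 0 < n)
    {t : ℚ} (hN : (N : ℚ) = t * ((p : ℚ) ^ (n * e) - 1)) {F C : Set (Fin d → ℝ)}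
    (hFC : F ⊆ (t : ℝ) • C) {v v₀ w : Fin d → ℤ} {a b : Fin d → ℝ}
    (hav : (1 / (1 - (p : ℝ) ^ e)) • latticeEmbed w + a = latticeEmbed v)
    (hbv₀ : (1 / (1 - (p : ℝ) ^ e)) • latticeEmbed w + b = latticeEmbed v₀)
    (hab : a + ((p : ℝ) ^ (n * e) - 1)⁻¹ • (a - b) ∈ F) :
    latticeEmbed (((p : ℤ) ^ e) ^ n • v + (∑ i ∈ Finset.range n, ((p : ℤ) ^ e) ^ i) • w - v₀)
      ∈ (N : ℝ) • C := by
  have hp' : (1 : ℝ) < p := by exact_mod_cast hp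
  have hq : (p : ℝ) ^ e ≠ 1 := (one_lt_pow₀ hp' he.ne').ne'
  have hK : (p : ℝ) ^ (n * e) - 1 ≠ 0 :=
    sub_ne_zero.2 (one_lt_pow₀ hp' (Nat.mul_pos hn he).ne').ne'
  obtain ⟨z, hz, hzF : (t : ℝ) • z = _⟩ := hFC hab
  refine ⟨z, hz, ?_⟩
  have hNR : (N : ℝ) = ((p : ℝ) ^ (n * e) - 1) * t := by
    have := congrArg ((↑) : ℚ → ℝ) hN
    push_cast at this
    rw [this, mul_comm]
  simp only [latticeEmbed_sub, latticeEmbed_add, latticeEmbed_zsmul, ← hav, ← hbv₀]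
  push_cast
  rw [pow_smul_add_geom_sum_smul_sub hq, hNR, ← smul_smul, hzF, ← pow_mul, mul_comm e n,
    smul_add, smul_smul, mul_inv_cancel₀ hK]
  module

theorem stmt_11_general {d : ℕ} (k : Type*) [Field k] (p : ℕ) (hp : p.Prime)
    (S : AddSubmonoid (Fin d → ℤ)) (σ : Set (Fin d → ℝ)) (hσ : IsRatPolyCone σ)
    (hS : ∀ v : Fin d → ℤ, v ∈ S ↔ latticeEmbed v ∈ σ)
    (e : ℕ) (he : 0 < e) (w : Fin d → ℤ)
    (φ : AddMonoidAlgebra k S → AddMonoidAlgebra k S)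
    (hφmono1 : ∀ (v : S) (u : Fin d → ℤ), ((p : ℤ) ^ e) • u = ↑v - w →
      ∃ hu : u ∈ S, φ (AddMonoidAlgebra.single v (1 : k)) =
        AddMonoidAlgebra.single (⟨u, hu⟩ : S) (1 : k))
    (𝔞 : Ideal (AddMonoidAlgebra k S))
    (t : ℚ) (ht : 0 ≤ t) (hden : ¬ (p ∣ t.den))
    (I : Ideal (AddMonoidAlgebra k S)) (hI : IsCartierFixed p e t φ 𝔞 I)
    (F : Set (Fin d → ℝ)) (hF : IsFaceOf F ((t : ℝ) • Newt k S 𝔞))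
    (v₀ : S) (hv₀ : AddMonoidAlgebra.single v₀ (1 : k) ∈ I)
    (hv₀F : latticeEmbed ↑v₀ ∈ {(1 / (1 - (p : ℝ) ^ e)) • latticeEmbed w} + F) :
    ∀ v : S,
      latticeEmbed ↑v ∈
        intrinsicInterior ℝ ({(1 / (1 - (p : ℝ) ^ e)) • latticeEmbed w} + F) →
      AddMonoidAlgebra.single v (1 : k) ∈ I := by
  intro v hv
  rw [intrinsicInterior_singleton_add, Set.singleton_add] at hv
  rw [Set.singleton_add] at hv₀F
  obtain ⟨a, ha, hav⟩ := hv
  obtain ⟨b, hb, hbv₀⟩ := hv₀F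
  obtain ⟨ε, hε, hnear⟩ := Metric.eventually_nhds_iff.1
    (eventually_add_smul_sub_mem_of_mem_intrinsicInterior ha hb)
  obtain ⟨n, N, hn, hN, hlarge⟩ := exists_natCast_eq_mul_pow_sub_one hp.one_lt he ht
    ((Nat.Prime.coprime_iff_not_dvd hp).2 hden) ε⁻¹
  have hK : 0 < (p : ℝ) ^ (n * e) - 1 := (inv_pos.2 hε).trans hlarge
  set u : Fin d → ℤ := ((p : ℤ) ^ e) ^ n • (v : Fin d → ℤ) +
    (∑ i ∈ Finset.range n, ((p : ℤ) ^ e) ^ i) • w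
  have hmem : latticeEmbed (u - (v₀ : Fin d → ℤ)) ∈ (N : ℝ) • Newt k S 𝔞 :=
    latticeEmbed_orbit_sub_mem_smul hp.one_lt he hn hN hF.1 hav hbv₀ (hnear (by
      rw [Real.dist_0_eq_abs, abs_inv, abs_of_pos hK]
      exact inv_lt_of_inv_lt₀ hε hlarge))
  have hg : u - (v₀ : Fin d → ℤ) ∈ S := mem_of_latticeEmbed_mem_smul_Newt hσ hS hmem
  have hu : u ∈ S := by simpa using S.add_mem hg v₀.2
  have hsplit : AddMonoidAlgebra.single (⟨u, hu⟩ : S) (1 : k) =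
      AddMonoidAlgebra.single ⟨u - (v₀ : Fin d → ℤ), hg⟩ 1 * AddMonoidAlgebra.single v₀ 1 := by
    rw [AddMonoidAlgebra.single_mul_single, one_mul]
    congr
    simp
  rw [← hI, ← iterate_single_geom_sum hφmono1 v n hu]
  refine Ideal.subset_span ⟨n, N, hn, hN, _, ?_, rfl⟩
  rw [hsplit]
  exact Ideal.mul_mem_mul (Ideal.subset_span (single_mem_intClSet_of_mem_smul_Newt hmem)) hv₀

/-- In the toric setting, if `I` is `C^{φ,𝔞^t}`-fixed, `F` is a face of
`t·Newt(𝔞)`, and some exponent `v₀` of a monomial of `I` lies in `w/(1−p^e) + F`, then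
every lattice point `v ∈ relint(w/(1−p^e) + F) ∩ S` has `x^v ∈ I`. -/
theorem stmt_11 {d : ℕ} (k : Type*) [Field k] (p : ℕ) (hp : p.Prime) [CharP k p]
    (S : AddSubmonoid (Fin d → ℤ)) (σ : Set (Fin d → ℝ)) (hσ : IsRatPolyCone σ)
    (hS : ∀ v : Fin d → ℤ, v ∈ S ↔ latticeEmbed v ∈ σ)
    (e : ℕ) (he : 0 < e) (w : Fin d → ℤ)
    (φ : AddMonoidAlgebra k S → AddMonoidAlgebra k S)
    (hφadd : ∀ x y, φ (x + y) = φ x + φ y)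
    (hφlin : ∀ r x, φ (r ^ p ^ e * x) = r * φ x)
    (hφmono1 : ∀ (v : S) (u : Fin d → ℤ), ((p : ℤ) ^ e) • u = ↑v - w →
      ∃ hu : u ∈ S, φ (AddMonoidAlgebra.single v (1 : k)) =
        AddMonoidAlgebra.single (⟨u, hu⟩ : S) (1 : k))
    (hφmono0 : ∀ v : S, (¬ ∃ u : Fin d → ℤ, ((p : ℤ) ^ e) • u = ↑v - w) →
      φ (AddMonoidAlgebra.single v (1 : k)) = 0)
    (𝔞 : Ideal (AddMonoidAlgebra k S)) (h𝔞 : IsMonomialIdeal k S 𝔞)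
    (t : ℚ) (ht : 0 ≤ t) (hden : ¬ (p ∣ t.den))
    (I : Ideal (AddMonoidAlgebra k S)) (hI : IsCartierFixed p e t φ 𝔞 I)
    (F : Set (Fin d → ℝ)) (hF : IsFaceOf F ((t : ℝ) • Newt k S 𝔞))
    (v₀ : S) (hv₀ : AddMonoidAlgebra.single v₀ (1 : k) ∈ I)
    (hv₀F : latticeEmbed ↑v₀ ∈ {(1 / (1 - (p : ℝ) ^ e)) • latticeEmbed w} + F) :
    ∀ v : S,
      latticeEmbed ↑v ∈
        intrinsicInterior ℝ ({(1 / (1 - (p : ℝ) ^ e)) • latticeEmbed w} + F) →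
      AddMonoidAlgebra.single v (1 : k) ∈ I :=
  stmt_11_general k p hp S σ hσ hS e he w φ hφmono1 𝔞 t ht hden I hI F hF v₀ hv₀ hv₀F
end

section
/- Let X' → X be a fixed log resolution and fix a ℚ-divisor D = K_{X'} − π*(K_X + Δ) − tG on X'. For reduced divisors E and F on X' with π(E), π(F) ⊆ Z, let E ∧ F denote the sum of their common components. Then for sufficiently small ε > 0, π_* O_{X'}(⌈D + εE⌉) ∩ π_* O_{X'}(⌈D + εF⌉) = π_* O_{X'}(⌈D + ε(E ∧ F)⌉). Consequently the set of intermediate adjoint ideals from a fixed resolution is closed under intersection. -/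
/-- The pushforward `π_* O_{X'}(⌈B⌉)` of a round-up of an `ℝ`-divisor `B`, modelled as
a subset of the function field `K`: the rational functions `g` with
`div(g) + ⌈B⌉ ≥ 0` componentwise, where `A` indexes the prime divisors on `X'` and
`ord i g` is the order of vanishing of `g` along the `i`-th prime divisor. -/
def secSet {K : Type*} [Zero K] (A : Type*) (ord : A → K → ℤ) (B : A → ℝ) : Set K :=
  {g | g = 0 ∨ ∀ i, (0 : ℝ) ≤ (ord i g : ℝ) + ((⌈B i⌉ : ℤ) : ℝ)}

/-- The indicator coefficient function of a reduced divisor with components `G`. -/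
noncomputable def red {A : Type*} (G : Set A) : A → ℝ :=
  open Classical in fun i => if i ∈ G then 1 else 0

/-- Round-up commutes with `min`, so the condition `div g + ⌈B ⊓ B'⌉ ≥ 0` splits
componentwise into the two conditions for `B` and `B'`. -/
theorem secSet_inf {K : Type*} [Zero K] (A : Type*) (ord : A → K → ℤ) (B B' : A → ℝ) :
    secSet A ord (B ⊓ B') = secSet A ord B ∩ secSet A ord B' := by
  ext g
  have hceil : ∀ i, ⌈(B ⊓ B') i⌉ = min ⌈B i⌉ ⌈B' i⌉ := fun i =>
    Int.ceil_mono.map_min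
  simp only [secSet, Set.mem_ofPred_eq, Set.mem_inter_iff, hceil, Int.cast_min,
    ← min_add_add_left, le_min_iff, forall_and]
  tauto

theorem red_inter {A : Type*} (E F : Set A) : red (E ∩ F) = red E ⊓ red F := by
  funext i
  by_cases hE : i ∈ E <;> by_cases hF : i ∈ F <;> simp [red, hE, hF]

theorem secSet_inter_red {K : Type*} [Zero K] (A : Type*) (ord : A → K → ℤ) (D : A → ℝ)
    {ε : ℝ} (hε : 0 ≤ ε) (E F : Set A) :
    secSet A ord (fun i => D i + ε * red E i) ∩ secSet A ord (fun i => D i + ε * red F i)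
      = secSet A ord (fun i => D i + ε * red (E ∩ F) i) := by
  rw [← secSet_inf, red_inter]
  congr 1
  funext i
  simp only [Pi.inf_apply, mul_min_of_nonneg _ _ hε, min_add_add_left]

theorem stmt_17_general {K : Type*} [Field K] (A : Type*) (ord : A → K → ℤ)
    (D : A → ℝ) (Zset : Set A) (E F : Set A) :
    ∃ ε₀ : ℝ, 0 < ε₀ ∧ ∀ ε : ℝ, 0 < ε → ε < ε₀ →
      (secSet A ord (fun i => D i + ε * red E i) ∩
          secSet A ord (fun i => D i + ε * red F i)
        = secSet A ord (fun i => D i + ε * red (E ∩ F) i)) ∧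
      (∀ I J : Set K,
        I ∈ {T | ∃ G : Set A, G ⊆ Zset ∧ T = secSet A ord (fun i => D i + ε * red G i)} →
        J ∈ {T | ∃ G : Set A, G ⊆ Zset ∧ T = secSet A ord (fun i => D i + ε * red G i)} →
        I ∩ J ∈
          {T | ∃ G : Set A, G ⊆ Zset ∧ T = secSet A ord (fun i => D i + ε * red G i)}) := by
  refine ⟨1, one_pos, fun ε hε _ => ⟨secSet_inter_red A ord D hε.le E F, ?_⟩⟩
  rintro I J ⟨G, hG, rfl⟩ ⟨G', hG', rfl⟩
  exact ⟨G ∩ G', Set.inter_subset_left.trans hG, secSet_inter_red A ord D hε.le G G'⟩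

/-- Fix a log resolution `π : X' → X` and the `ℚ`-divisor
`D = K_{X'} − π^*(K_X + Δ) − tG` on `X'` (its coefficients indexed by the prime
divisors `A` of `X'`).  For reduced divisors `E, F` with components mapping into `Z`
(components indexed by subsets of `Zset ⊆ A`), and `E ∧ F` their common components,
for all sufficiently small `ε > 0`:
`π_* O(⌈D+εE⌉) ∩ π_* O(⌈D+εF⌉) = π_* O(⌈D+ε(E∧F)⌉)`; consequently the set of
intermediate adjoint ideals from the fixed resolution is closed under intersection. -/
theorem stmt_17 {K : Type*} [Field K] (A : Type*) (ord : A → K → ℤ)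
    (D : A → ℝ) (Zset : Set A) (E F : Set A) (hE : E ⊆ Zset) (hF : F ⊆ Zset) :
    ∃ ε₀ : ℝ, 0 < ε₀ ∧ ∀ ε : ℝ, 0 < ε → ε < ε₀ →
      (secSet A ord (fun i => D i + ε * red E i) ∩
          secSet A ord (fun i => D i + ε * red F i)
        = secSet A ord (fun i => D i + ε * red (E ∩ F) i)) ∧
      (∀ I J : Set K,
        I ∈ {T | ∃ G : Set A, G ⊆ Zset ∧ T = secSet A ord (fun i => D i + ε * red G i)} →
        J ∈ {T | ∃ G : Set A, G ⊆ Zset ∧ T = secSet A ord (fun i => D i + ε * red G i)} →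
        I ∩ J ∈
          {T | ∃ G : Set A, G ⊆ Zset ∧ T = secSet A ord (fun i => D i + ε * red G i)}) :=
  stmt_17_general A ord D Zset E F
end
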